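/- arXiv:1705.09183 — 3 statements merged into one kernel-verified Lean document; each statement's English description precedes it below -/
import Mathlib

section
/- Let g : ℂ → ℂ be a nonconstant entire function and δ ∈ ℂ. If the functional equation g(g(w)) = f(g(w)) − δw holds for all w ∈ ℂ, where f = g + h for some entire h, then h(g(w)) = δw for all w; if additionally δ ≠ 0, then g is injective and h is surjective, hence both g and h are affine polynomials, and thus f is affine. -/
/-!
Composing the functional equation with `f = g + h` gives `h ∘ g = δ • id`, so for `δ ≠ 0` the map
`k = δ⁻¹ • h` is an entire left inverse of `g`. Then `g` is proper, so `w ↦ 1 / g (1 / w)` has a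
removable zero at `0`; its finite order bounds the growth of `g` by a power of `z`, and Liouville's
theorem, applied inductively to `dslope g 0`, makes `g` a polynomial `p`. An injective polynomial
over `ℂ` is surjective, so `k` is a two-sided inverse, hence a polynomial `q` too, and
`q.comp p = X` forces `p` to have degree one.
-/

open Polynomial Filter Set Function Bornology Topology Asymptotics

theorem Differentiable.exists_polynomial_of_isBigO_pow {f : ℂ → ℂ} (hf : Differentiable ℂ f)
    {n : ℕ} (hbig : f =O[cocompact ℂ] (· ^ n)) : ∃ p : ℂ[X], ∀ z, f z = p.eval z := by
  induction n generalizing f with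
  | zero =>
    have hbdd : IsBounded (range f) :=
      hf.continuous.isBounded_range_iff_isBigO.mpr (by simpa [Pi.one_def] using hbig)
    obtain ⟨c, hc⟩ := hf.exists_eq_const_of_bounded hbdd
    exact ⟨C c, by simp [hc]⟩
  | succ n ih =>
    have hslope : Differentiable ℂ (dslope f 0) := by
      rw [← differentiableOn_univ]
      exact (Complex.differentiableOn_dslope univ_mem).mpr hf.differentiableOn
    have hconst : (fun _ ↦ f 0) =O[cocompact ℂ] (· ^ (n + 1)) := by
      refine (isLittleO_const_left.mpr (Or.inr ?_)).isBigO
      simpa [Function.comp_def] using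
        (tendsto_pow_atTop n.succ_ne_zero).comp tendsto_norm_cocompact_atTop
    have hne : ∀ᶠ z in cocompact ℂ, z ≠ 0 :=
      Metric.cobounded_eq_cocompact (α := ℂ) ▸ eventually_ne_cobounded 0
    have hslope_big : dslope f 0 =O[cocompact ℂ] (· ^ n) := by
      refine ((isBigO_refl (·⁻¹) _).mul (hbig.sub hconst)).congr' ?_ ?_
      · filter_upwards [hne] with z hz
        rw [dslope_of_ne _ hz, slope_def_field, sub_zero, div_eq_inv_mul]
      · filter_upwards [hne] with z hz
        rw [mul_comm, pow_succ, mul_inv_cancel_right₀ hz]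
    obtain ⟨p, hp⟩ := ih hslope hslope_big
    refine ⟨C (f 0) + X * p, fun z ↦ ?_⟩
    have hz := sub_smul_dslope f 0 z
    simp only [sub_zero, smul_eq_mul] at hz
    simp only [eval_add, eval_C, eval_mul, eval_X, ← hp]
    linear_combination -hz

theorem Differentiable.exists_isBigO_pow_of_tendsto_cocompact {g : ℂ → ℂ}
    (hg : Differentiable ℂ g) (hproper : Tendsto g (cocompact ℂ) (cocompact ℂ)) :
    ∃ n : ℕ, g =O[cocompact ℂ] (· ^ n) := by
  rw [← Metric.cobounded_eq_cocompact] at hproper ⊢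
  have hinf : Tendsto (fun w : ℂ ↦ g w⁻¹) (𝓝[≠] 0) (cobounded ℂ) :=
    hproper.comp tendsto_inv₀_nhdsNE_zero
  -- `g` read through the chart `w ↦ w⁻¹` at infinity, on both sides
  set G : ℂ → ℂ := update (fun w ↦ (g w⁻¹)⁻¹) 0 0
  have hG : ∀ᶠ w in 𝓝[≠] 0, w ≠ 0 ∧ g w⁻¹ ≠ 0 :=
    eventually_mem_nhdsWithin.and (hinf.eventually (eventually_ne_cobounded 0))
  have hG_eq {w : ℂ} (hw : w ≠ 0) : G w = (g w⁻¹)⁻¹ := update_of_ne hw _ _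
  have hG_an : AnalyticAt ℂ G 0 := by
    refine Complex.analyticAt_of_differentiable_on_punctured_nhds_of_continuousAt ?_ ?_
    · filter_upwards [hG] with w ⟨hw, hgw⟩
      refine (((hg _).comp w (differentiableAt_inv hw)).inv hgw).congr_of_eventuallyEq ?_
      filter_upwards [isOpen_compl_singleton.mem_nhds hw] with w' hw'
      exact hG_eq hw'
    · exact continuousAt_update_same.mpr (tendsto_inv₀_cobounded.comp hinf)
  have hG_ne : ¬∀ᶠ w in 𝓝 0, G w = 0 := fun h0 ↦ by
    obtain ⟨w, hw0, hw, hgw⟩ := ((h0.filter_mono nhdsWithin_le_nhds).and hG).exists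
    exact inv_ne_zero hgw ((hG_eq hw).symm.trans hw0)
  obtain ⟨n, v, hv, hv0, hGv⟩ := hG_an.exists_eventuallyEq_pow_smul_nonzero_iff.mpr hG_ne
  have hg_eq : g =ᶠ[cobounded ℂ] fun z ↦ z ^ n * (v z⁻¹)⁻¹ := by
    filter_upwards [tendsto_inv₀_cobounded'.eventually
      (hG.and (hGv.filter_mono nhdsWithin_le_nhds))] with z ⟨⟨hz, _⟩, hGz⟩
    rw [hG_eq hz, inv_inv, sub_zero, smul_eq_mul] at hGz
    rw [← inv_inv (g z), hGz, mul_inv, inv_pow, inv_inv]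
  have hv_inv : (fun z : ℂ ↦ (v z⁻¹)⁻¹) =O[cobounded ℂ] (fun _ ↦ (1 : ℂ)) :=
    ((hv.continuousAt.tendsto.inv₀ hv0).comp tendsto_inv₀_cobounded).isBigO_one ℂ
  exact ⟨n, ((isBigO_refl _ _).mul hv_inv).congr' hg_eq.symm (by simp)⟩

theorem Differentiable.exists_polynomial_of_tendsto_cocompact {g : ℂ → ℂ}
    (hg : Differentiable ℂ g) (hproper : Tendsto g (cocompact ℂ) (cocompact ℂ)) :
    ∃ p : ℂ[X], ∀ z, g z = p.eval z :=
  let ⟨_, hn⟩ := hg.exists_isBigO_pow_of_tendsto_cocompact hproper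
  hg.exists_polynomial_of_isBigO_pow hn

theorem Polynomial.surjective_eval_of_injective {K : Type*} [Field K] [IsAlgClosed K]
    {p : K[X]} (hp : Injective p.eval) : Surjective p.eval := by
  have hdeg : 0 < p.degree := by
    by_contra! hle
    rw [eq_C_of_degree_le_zero hle] at hp
    exact zero_ne_one (hp (by simp : (C (p.coeff 0)).eval 0 = (C (p.coeff 0)).eval 1))
  intro c
  obtain ⟨z, hz⟩ := IsAlgClosed.exists_root (p - C c) (by rw [degree_sub_C hdeg]; exact hdeg.ne')
  exact ⟨z, by simpa [sub_eq_zero] using hz⟩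

theorem Polynomial.natDegree_eq_one_of_comp_eq_X {R : Type*} [Semiring R] [NoZeroDivisors R]
    [Nontrivial R] {p q : R[X]} (hqp : q.comp p = X) : p.natDegree = 1 :=
  Nat.eq_one_of_mul_eq_one_left (by rw [← natDegree_comp, hqp, natDegree_X])

theorem Differentiable.exists_affine_of_leftInverse {g k : ℂ → ℂ} (hg : Differentiable ℂ g)
    (hk : Differentiable ℂ k) (hkg : LeftInverse k g) : ∃ a b : ℂ, ∀ z, g z = a * z + b := by
  obtain ⟨p, hp⟩ := hg.exists_polynomial_of_tendsto_cocompact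
    (hkg.isClosedEmbedding hk.continuous hg.continuous).tendsto_cocompact
  obtain rfl : g = p.eval := funext hp
  have hgk : LeftInverse p.eval k :=
    hkg.rightInverse_of_surjective (surjective_eval_of_injective hkg.injective)
  obtain ⟨q, hq⟩ := hk.exists_polynomial_of_tendsto_cocompact
    (hgk.isClosedEmbedding hg.continuous hk.continuous).tendsto_cocompact
  have hqp : q.comp p = X := Polynomial.funext fun z ↦ by rw [eval_comp, ← hq, hkg z, eval_X]
  refine ⟨p.coeff 1, p.coeff 0, fun z ↦ ?_⟩
  rw [p.eq_X_add_C_of_natDegree_le_one (natDegree_eq_one_of_comp_eq_X hqp).le]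
  simp

theorem stmt4_general (g h : ℂ → ℂ) (hg : Differentiable ℂ g) (hh : Differentiable ℂ h) (δ : ℂ)
    (f : ℂ → ℂ) (hf : ∀ z, f z = g z + h z)
    (heq : ∀ w, g (g w) = f (g w) - δ * w) :
    (∀ w, h (g w) = δ * w) ∧
    (δ ≠ 0 → Function.Injective g ∧ Function.Surjective h ∧
      (∃ a b : ℂ, ∀ z, g z = a * z + b) ∧ (∃ a b : ℂ, ∀ z, h z = a * z + b) ∧
      (∃ a b : ℂ, ∀ z, f z = a * z + b)) := by
  have hhg (w : ℂ) : h (g w) = δ * w := by linear_combination -hf (g w) - heq w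
  refine ⟨hhg, fun hδ ↦ ?_⟩
  have hkg : LeftInverse (δ⁻¹ • h) g := fun w ↦ by simp [hhg, hδ]
  obtain ⟨a, b, hab⟩ := hg.exists_affine_of_leftInverse (hh.const_smul δ⁻¹) hkg
  have ha : a ≠ 0 := by
    rintro rfl
    exact zero_ne_one (hkg.injective (by simp [hab] : g 0 = g 1))
  have hh_aff (z : ℂ) : h z = δ / a * z + -(δ * b / a) := by
    have := hhg ((z - b) / a)
    rw [hab, mul_div_cancel₀ _ ha, sub_add_cancel] at this
    rw [this]; ring
  refine ⟨hkg.injective, fun y ↦ ⟨(y + δ * b / a) / (δ / a), ?_⟩, ⟨a, b, hab⟩,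
    ⟨_, _, hh_aff⟩, ⟨a + δ / a, b + -(δ * b / a), fun z ↦ ?_⟩⟩
  · rw [hh_aff, mul_div_cancel₀ _ (div_ne_zero hδ ha)]; ring
  · rw [hf, hab, hh_aff]; ring

/-- Graph case `{z = g(w)}` of invariance: if `g(g w) = f(g w) - δ w` with
`f = g + h`, then `h ∘ g = δ·id`; if moreover `δ ≠ 0` then `g` is injective,
`h` is surjective, and `g`, `h`, `f` are all affine. -/
theorem stmt4 (g h : ℂ → ℂ) (hg : Differentiable ℂ g) (hh : Differentiable ℂ h)
    (hgnc : ¬ ∃ c : ℂ, ∀ w, g w = c) (δ : ℂ)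
    (f : ℂ → ℂ) (hf : ∀ z, f z = g z + h z)
    (heq : ∀ w, g (g w) = f (g w) - δ * w) :
    (∀ w, h (g w) = δ * w) ∧
    (δ ≠ 0 → Function.Injective g ∧ Function.Surjective h ∧
      (∃ a b : ℂ, ∀ z, g z = a * z + b) ∧ (∃ a b : ℂ, ∀ z, h z = a * z + b) ∧
      (∃ a b : ℂ, ∀ z, f z = a * z + b)) :=
  stmt4_general g h hg hh δ f hf heq
end

section
/- For α > 0 define A_α = e^{−α}/(1 − e^{−α}), η_α(x) = A_α e^{−x}, and R_α = {(z,w) ∈ ℂ² : Re z > Re w + α + η_α(Re w)}. Let F(z,w) = (e^{−z} + 2z − w, z). Then each R_α is forward invariant under F: if (z,w) ∈ R_α then F(z,w) ∈ R_α. -/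
/-!
Write `A = e^{-α}/(1 - e^{-α})`, so that `(1 + A) e^{-α} = A`. If `(z, w) ∈ R_α` then
`Re z > Re w + α`, hence `(1 + A) e^{-Re z} < (1 + A) e^{-α} e^{-Re w} = A e^{-Re w}`.
Since `Re e^{-z} ≥ -e^{-Re z}`, the new gap `Re e^{-z} + Re z - Re w` exceeds
`α + A e^{-Re w} - e^{-Re z} > α + A e^{-Re z}`, which is membership of `F(z, w)` in `R_α`.
-/

open Real

lemma Complex.neg_exp_re_le_re_exp (z : ℂ) : -Real.exp z.re ≤ (Complex.exp z).re := by
  rw [Complex.exp_re]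
  nlinarith [Real.neg_one_le_cos z.im, Real.exp_pos z.re]

lemma one_add_div_one_sub_mul {q : ℝ} (hq : q ≠ 1) : (1 + q / (1 - q)) * q = q / (1 - q) := by
  have : 1 - q ≠ 0 := sub_ne_zero.mpr hq.symm
  field_simp
  ring

lemma one_add_mul_exp_neg_lt {A α x y : ℝ} (hA : 0 ≤ A) (hAα : (1 + A) * exp (-α) = A)
    (hxy : y + α < x) : (1 + A) * exp (-x) < A * exp (-y) :=
  calc (1 + A) * exp (-x) < (1 + A) * (exp (-α) * exp (-y)) := by
        gcongr
        rw [← exp_add]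
        exact exp_lt_exp.mpr (by linarith)
    _ = A * exp (-y) := by rw [← mul_assoc, hAα]

lemma henon_gap_lt_of_gap_lt {A α : ℝ} (hA : 0 ≤ A) (hAα : (1 + A) * exp (-α) = A) {z w : ℂ}
    (h : w.re + α + A * exp (-w.re) < z.re) :
    z.re + α + A * exp (-z.re) < (Complex.exp (-z) + 2 * z - w).re := by
  have hgap : w.re + α < z.re := by linarith [mul_nonneg hA (exp_pos (-w.re)).le]
  have hdecay := one_add_mul_exp_neg_lt hA hAα hgap
  have hre : -exp (-z.re) ≤ (Complex.exp (-z)).re := by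
    simpa using Complex.neg_exp_re_le_re_exp (-z)
  simp only [Complex.sub_re, Complex.add_re, Complex.mul_re, Complex.re_ofNat, Complex.im_ofNat]
  linarith

/-- Forward invariance of `R_α = {Re z > Re w + α + η_α(Re w)}` under
`F(z,w) = (e^{-z} + 2z - w, z)`, where `η_α(x) = (e^{-α}/(1-e^{-α})) e^{-x}`. -/
theorem stmt10 (α : ℝ) (hα : 0 < α) :
    ∀ z w : ℂ,
      z.re > w.re + α + (Real.exp (-α) / (1 - Real.exp (-α))) * Real.exp (-w.re) →
      (Complex.exp (-z) + 2 * z - w).re >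
        z.re + α + (Real.exp (-α) / (1 - Real.exp (-α))) * Real.exp (-z.re) := by
  intro z w h
  have hq : exp (-α) < 1 := exp_lt_one_iff.mpr (by linarith)
  have hA : 0 ≤ exp (-α) / (1 - exp (-α)) := div_nonneg (exp_pos _).le (by linarith)
  exact henon_gap_lt_of_gap_lt hA (one_add_div_one_sub_mul hq.ne) h
end

section
/- Let f : ℂ → ℂ be entire, a ∈ ℂ with 0 < |a| < 1, and F(z,w) = (f(z) + aw, az). Let 0 < a'' < |a| < a' < 1 and let D₁ ⊂⊂ D₂ ⊂ ℂ be open disks with compact containment. Then there exists α > 0 such that: whenever s ∈ ℂ is a constant with sup_{z ∈ closure(D₂)} |f(z) − s| ≤ α, the map F satisfies a''·‖(z,w) − (z',w')‖ ≤ ‖F(z,w) − F(z',w')‖ ≤ a'·‖(z,w) − (z',w')‖ for all z, z' ∈ closure(D₁) and all w, w' ∈ ℂ. -/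
/-!
Cauchy's estimate on circles of a fixed radius `δ` around the points of `closedBall c₁ r₁`
(which fit inside `ball c₂ r₂` by compactness) shows that `f` is `L`-Lipschitz on
`closedBall c₁ r₁` as soon as `f` is within `L δ` of a constant. Then
`F(z,w) - F(z',w')` is, up to an error of norm at most `L ‖z - z'‖` in the first coordinate,
the vector `(a (w - w'), a (z - z'))` of norm `|a| ‖(z,w) - (z',w')‖`, so for `L` small the
bi-Lipschitz constants are as close to `|a|` as we like.
-/

open Metric Filter Topology

section CauchyEstimate

variable {F : Type*} [NormedAddCommGroup F] [NormedSpace ℂ F]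

theorem IsCompact.exists_norm_deriv_le_of_norm_sub_const_le {K U : Set ℂ} (hK : IsCompact K)
    (hU : IsOpen U) (hKU : K ⊆ U) :
    ∃ δ > 0, ∀ (f : ℂ → F) (s : F) (M : ℝ), DifferentiableOn ℂ f U →
      (∀ z ∈ U, ‖f z - s‖ ≤ M) → ∀ z ∈ K, ‖deriv f z‖ ≤ M / δ := by
  obtain ⟨δ, hδ, hδU⟩ := hK.exists_cthickening_subset_open hU hKU
  refine ⟨δ, hδ, fun f s M hf hM z hz => ?_⟩
  have hball : closedBall z δ ⊆ U := (closedBall_subset_cthickening hz δ).trans hδU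
  have hcont : DiffContOnCl ℂ (fun w => f w - s) (ball z δ) :=
    (hf.sub_const s).diffContOnCl_ball hball
  simpa using Complex.norm_deriv_le_of_forall_mem_sphere_norm_le hδ hcont
    fun w hw => hM w (hball (sphere_subset_closedBall hw))

theorem Convex.exists_norm_sub_le_mul_of_norm_sub_const_le {K U : Set ℂ} (hKc : Convex ℝ K)
    (hK : IsCompact K) (hU : IsOpen U) (hKU : K ⊆ U) :
    ∃ δ > 0, ∀ (f : ℂ → F) (s : F) (L : ℝ), DifferentiableOn ℂ f U →
      (∀ z ∈ U, ‖f z - s‖ ≤ L * δ) → ∀ z ∈ K, ∀ z' ∈ K, ‖f z - f z'‖ ≤ L * ‖z - z'‖ := by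
  obtain ⟨δ, hδ, hderiv⟩ := hK.exists_norm_deriv_le_of_norm_sub_const_le (F := F) hU hKU
  refine ⟨δ, hδ, fun f s L hf hL z hz z' hz' => ?_⟩
  refine hKc.norm_image_sub_le_of_norm_deriv_le
    (fun x hx => hf.differentiableAt (hU.mem_nhds (hKU hx))) (fun x hx => ?_) hz' hz
  simpa [hδ.ne'] using hderiv f s (L * δ) hf hL x hx

end CauchyEstimate

theorem exists_pos_sq_bounds {A b c : ℝ} (hb : b ^ 2 < A ^ 2) (hc : A ^ 2 < c ^ 2) :
    ∃ L > 0, b ^ 2 < A ^ 2 - L * A ∧ A ^ 2 + L * A + L ^ 2 < c ^ 2 := by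
  have hlow : ∀ᶠ L in 𝓝 (0 : ℝ), b ^ 2 < A ^ 2 - L * A :=
    continuousAt_const.eventually_lt (by fun_prop) (by simpa using hb)
  have hup : ∀ᶠ L in 𝓝 (0 : ℝ), A ^ 2 + L * A + L ^ 2 < c ^ 2 :=
    (by fun_prop : Continuous fun L : ℝ => A ^ 2 + L * A + L ^ 2).continuousAt.eventually_lt
      continuousAt_const (by simpa using hc)
  obtain ⟨L, ⟨hL₁, hL₂⟩, hL⟩ := (((hlow.and hup).filter_mono nhdsWithin_le_nhds).and
    (self_mem_nhdsWithin (s := Set.Ioi 0))).exists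
  exact ⟨L, hL, hL₁, hL₂⟩

theorem sq_bounds_of_abs_sub_le {P A L x y : ℝ} (hP : 0 ≤ P) (hA : 0 ≤ A) (hL : 0 ≤ L)
    (hy : 0 ≤ y) (h : |P - A * y| ≤ L * x) :
    (A ^ 2 - L * A) * (x ^ 2 + y ^ 2) ≤ P ^ 2 + (A * x) ^ 2 ∧
      P ^ 2 + (A * x) ^ 2 ≤ (A ^ 2 + L * A + L ^ 2) * (x ^ 2 + y ^ 2) := by
  obtain ⟨hlow, hup⟩ := abs_le.mp h
  have hxy : 2 * (x * y) ≤ x ^ 2 + y ^ 2 := by nlinarith [sq_nonneg (x - y)]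
  have hLA : 0 ≤ L * A := mul_nonneg hL hA
  have hPsq : A ^ 2 * y ^ 2 - 2 * (L * A) * (x * y) ≤ P ^ 2 := by
    rcases le_total (L * x) (A * y) with hcase | hcase
    · nlinarith
    · nlinarith [mul_nonneg hA hy]
  constructor
  · nlinarith
  · nlinarith [sq_nonneg (L * y)]

theorem stmt15_general (f : ℂ → ℂ) (hf : Differentiable ℂ f) (a : ℂ)
    (a'' a' : ℝ) (h1 : 0 < a'') (h2 : a'' < ‖a‖)
    (h3 : ‖a‖ < a') (c₁ c₂ : ℂ) (r₁ r₂ : ℝ)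
    (hcc : Metric.closedBall c₁ r₁ ⊆ Metric.ball c₂ r₂) :
    ∃ α > (0 : ℝ), ∀ s : ℂ,
      (∀ z ∈ Metric.closedBall c₂ r₂, ‖f z - s‖ ≤ α) →
      ∀ z z' : ℂ, z ∈ Metric.closedBall c₁ r₁ → z' ∈ Metric.closedBall c₁ r₁ →
      ∀ w w' : ℂ,
        a'' * Real.sqrt (‖z - z'‖ ^ 2 + ‖w - w'‖ ^ 2) ≤
          Real.sqrt (‖(f z + a * w) - (f z' + a * w')‖ ^ 2 +
            ‖a * z - a * z'‖ ^ 2) ∧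
        Real.sqrt (‖(f z + a * w) - (f z' + a * w')‖ ^ 2 +
            ‖a * z - a * z'‖ ^ 2) ≤
          a' * Real.sqrt (‖z - z'‖ ^ 2 + ‖w - w'‖ ^ 2) := by
  obtain ⟨δ, hδ, hLip⟩ := (convex_closedBall c₁ r₁).exists_norm_sub_le_mul_of_norm_sub_const_le
    (F := ℂ) (isCompact_closedBall c₁ r₁) isOpen_ball hcc
  obtain ⟨L, hL, hlow, hup⟩ := exists_pos_sq_bounds (A := ‖a‖)
    (pow_lt_pow_left₀ h2 h1.le two_ne_zero) (pow_lt_pow_left₀ h3 (norm_nonneg a) two_ne_zero)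
  refine ⟨L * δ, mul_pos hL hδ, fun s hs z z' hz hz' w w' => ?_⟩
  have hfz : ‖f z - f z'‖ ≤ L * ‖z - z'‖ :=
    hLip f s L hf.differentiableOn (fun x hx => hs x (ball_subset_closedBall hx)) z hz z' hz'
  have hcoord : |‖(f z + a * w) - (f z' + a * w')‖ - ‖a‖ * ‖w - w'‖| ≤ L * ‖z - z'‖ := by
    rw [← norm_mul]
    refine (abs_norm_sub_norm_le _ _).trans (le_of_eq_of_le ?_ hfz)
    congr 1; ring
  obtain ⟨hsq_low, hsq_up⟩ :=
    sq_bounds_of_abs_sub_le (norm_nonneg _) (norm_nonneg a) hL.le (norm_nonneg _) hcoord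
  rw [← mul_sub, norm_mul]
  constructor
  · rw [← Real.sqrt_sq h1.le, ← Real.sqrt_mul (sq_nonneg _)]
    exact Real.sqrt_le_sqrt (le_trans (by gcongr) hsq_low)
  · rw [← Real.sqrt_sq ((norm_nonneg a).trans_lt h3).le, ← Real.sqrt_mul (sq_nonneg _)]
    exact Real.sqrt_le_sqrt (hsq_up.trans (by gcongr))

/-- If `f` is close enough to a constant on the larger disk, then
`F(z,w) = (f z + a w, a z)` is bi-Lipschitz with constants `a'' < |a| < a'`
(Euclidean norm) on `closure D₁ × ℂ`. -/
theorem stmt15 (f : ℂ → ℂ) (hf : Differentiable ℂ f) (a : ℂ)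
    (ha0 : 0 < ‖a‖) (ha1 : ‖a‖ < 1)
    (a'' a' : ℝ) (h1 : 0 < a'') (h2 : a'' < ‖a‖)
    (h3 : ‖a‖ < a') (h4 : a' < 1)
    (c₁ c₂ : ℂ) (r₁ r₂ : ℝ) (hr₁ : 0 < r₁) (hr₂ : 0 < r₂)
    (hcc : Metric.closedBall c₁ r₁ ⊆ Metric.ball c₂ r₂) :
    ∃ α > (0 : ℝ), ∀ s : ℂ,
      (∀ z ∈ Metric.closedBall c₂ r₂, ‖f z - s‖ ≤ α) →
      ∀ z z' : ℂ, z ∈ Metric.closedBall c₁ r₁ → z' ∈ Metric.closedBall c₁ r₁ →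
      ∀ w w' : ℂ,
        a'' * Real.sqrt (‖z - z'‖ ^ 2 + ‖w - w'‖ ^ 2) ≤
          Real.sqrt (‖(f z + a * w) - (f z' + a * w')‖ ^ 2 +
            ‖a * z - a * z'‖ ^ 2) ∧
        Real.sqrt (‖(f z + a * w) - (f z' + a * w')‖ ^ 2 +
            ‖a * z - a * z'‖ ^ 2) ≤
          a' * Real.sqrt (‖z - z'‖ ^ 2 + ‖w - w'‖ ^ 2) :=
  stmt15_general f hf a a'' a' h1 h2 h3 c₁ c₂ r₁ r₂ hcc
end
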